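/- Let β ∈ ℝ and α ∈ [0,1]. Then there exists C > 0 such that for all ε ∈ (0,1] and all u ∈ H^β, one has ‖D_ε u − ∂_x u‖_{β−1−α} ≤ C ε^α ‖u‖_β, where ∂_x is the derivative acting as the Fourier multiplier (∂_x u)_k = ik u_k. -/

import Mathlib

open MeasureTheory
open scoped BigOperators

/-- The squared Sobolev norm `‖u‖_σ² = Σ_{k∈ℤ} (1+k²)^σ |u_k|²` on Fourier coefficients. -/
noncomputable def sobNormSq (σ : ℝ) (a : ℤ → ℂ) : ℝ :=
  ∑' k : ℤ, (1 + (k : ℝ) ^ 2) ^ σ * ‖a k‖ ^ 2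

/-- The Fourier transform `μ̂(ξ) = ∫ e^{iξy} μ(dy)` of the signed measure `μ = μp - μn`. -/
noncomputable def muHat (μp μn : Measure ℝ) (ξ : ℝ) : ℂ :=
  (∫ y, Complex.exp (Complex.I * ξ * y) ∂μp) - ∫ y, Complex.exp (Complex.I * ξ * y) ∂μn

/-!
Let `m(ξ) = μ̂(ξ) - iξ`, so that the symbol of `D_ε - ∂_x` is `ε⁻¹ m(εk)`. Since `μ` has mass `0`
and first moment `1`, `m(ξ)` is the integral of the Taylor remainder `e^{iξy} - 1 - iξy`, whence
`|m(ξ)| ≤ (∫ y² d(μp + μn)) ξ²`; on the other hand `|μ̂| ≤ (μp + μn)(ℝ)`. The first bound is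
used where `ε|k| ≤ 1`, the second where `ε|k| ≥ 1`, and in both regimes they give
`|ε⁻¹ μ̂(εk) - ik| ≤ C ε^α |k|^{1+α}`. A multiplier of order `1 + α` maps `H^β` to `H^{β-1-α}`.
-/

theorem norm_exp_I_mul_ofReal_sub_one_sub_le (x : ℝ) :
    ‖Complex.exp (Complex.I * x) - 1 - Complex.I * x‖ ≤ x ^ 2 := by
  set f : ℝ → ℂ := fun s => Complex.exp (Complex.I * s) - 1 - Complex.I * s
  have hf : ∀ s : ℝ, HasDerivAt f ((Complex.exp (Complex.I * s) - 1) * Complex.I) s := by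
    intro s
    have hlin : HasDerivAt (fun s : ℝ => Complex.I * s) Complex.I s := by
      simpa using (Complex.ofRealCLM.hasDerivAt (x := s)).const_mul Complex.I
    exact ((hlin.cexp.sub_const 1).sub hlin).congr_deriv (by ring)
  have hbound : ∀ s ∈ Metric.closedBall (0 : ℝ) |x|,
      ‖(Complex.exp (Complex.I * s) - 1) * Complex.I‖ ≤ |x| := by
    intro s hs
    rw [norm_mul, Complex.norm_I, mul_one]
    exact Real.norm_exp_I_mul_ofReal_sub_one_le.trans (by simpa using hs)
  have := Convex.norm_image_sub_le_of_norm_hasDerivWithin_le (fun s _ => (hf s).hasDerivWithinAt)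
    hbound (convex_closedBall 0 |x|) (Metric.mem_closedBall_self (abs_nonneg x))
    (by simp : x ∈ Metric.closedBall (0 : ℝ) |x|)
  simpa [f, ← sq] using this

section Moments

variable {μ : Measure ℝ}

theorem integrable_pow_of_integrable_abs_pow [IsFiniteMeasure μ] {n m : ℕ} (hnm : n ≤ m)
    (h : Integrable (fun y : ℝ => |y| ^ m) μ) : Integrable (fun y : ℝ => y ^ n) μ := by
  refine ((integrable_const 1).add h).mono' (by fun_prop) (ae_of_all _ fun y => ?_)
  change ‖y ^ n‖ ≤ 1 + |y| ^ m
  rw [Real.norm_eq_abs, abs_pow]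
  rcases le_total |y| 1 with hy | hy
  · linarith [pow_le_one₀ (abs_nonneg y) hy (n := n), pow_nonneg (abs_nonneg y) m]
  · linarith [pow_le_pow_right₀ hy hnm]

theorem norm_integral_exp_I_mul_sub_one_sub_le (h2 : Integrable (fun y : ℝ => y ^ 2) μ)
    (ξ : ℝ) :
    ‖∫ y, (Complex.exp (Complex.I * ξ * y) - 1 - Complex.I * ξ * y) ∂μ‖
      ≤ (∫ y, y ^ 2 ∂μ) * ξ ^ 2 := by
  rw [← integral_mul_const]
  refine norm_integral_le_of_norm_le (h2.mul_const _) (ae_of_all _ fun y => ?_)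
  have hξy : Complex.I * ξ * y = Complex.I * ((ξ * y : ℝ) : ℂ) := by push_cast; ring
  rw [hξy]
  exact (norm_exp_I_mul_ofReal_sub_one_sub_le (ξ * y)).trans_eq (by ring)

theorem integrable_exp_I_mul [IsFiniteMeasure μ] (ξ : ℝ) :
    Integrable (fun y : ℝ => Complex.exp (Complex.I * ξ * y)) μ :=
  (integrable_const (1 : ℝ)).mono' (by fun_prop) (ae_of_all _ fun y => by simp [Complex.norm_exp])

theorem norm_integral_exp_I_mul_le [IsFiniteMeasure μ] (ξ : ℝ) :
    ‖∫ y, Complex.exp (Complex.I * ξ * y) ∂μ‖ ≤ μ.real Set.univ := by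
  simpa using norm_integral_le_of_norm_le_const (μ := μ) (C := 1)
    (ae_of_all _ fun y => by simp [Complex.norm_exp])

theorem integral_exp_I_mul_sub_one_sub [IsFiniteMeasure μ] (h1 : Integrable (fun y : ℝ => y) μ)
    (ξ : ℝ) :
    ∫ y, (Complex.exp (Complex.I * ξ * y) - 1 - Complex.I * ξ * y) ∂μ
      = (∫ y, Complex.exp (Complex.I * ξ * y) ∂μ) - μ.real Set.univ
        - Complex.I * ξ * ((∫ y, y ∂μ : ℝ) : ℂ) := by
  have hlin : Integrable (fun y : ℝ => Complex.I * ξ * y) μ := (h1.ofReal (𝕜 := ℂ)).const_mul _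
  have hexp_sub : Integrable (fun y : ℝ => Complex.exp (Complex.I * ξ * y) - 1) μ :=
    (integrable_exp_I_mul ξ).sub (integrable_const 1)
  rw [integral_sub hexp_sub hlin, integral_sub (integrable_exp_I_mul ξ) (integrable_const 1),
    integral_const_mul, integral_complex_ofReal]
  simp

end Moments

section FourierTransform

variable {μp μn : Measure ℝ} [IsFiniteMeasure μp] [IsFiniteMeasure μn]

theorem norm_muHat_le (ξ : ℝ) : ‖muHat μp μn ξ‖ ≤ (μp + μn).real Set.univ := by
  rw [measureReal_add_apply]
  exact (norm_sub_le _ _).trans (add_le_add (norm_integral_exp_I_mul_le ξ)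
    (norm_integral_exp_I_mul_le ξ))

theorem norm_muHat_sub_I_mul_le (hzero : μp Set.univ = μn Set.univ)
    (hmean : (∫ y, y ∂μp) - ∫ y, y ∂μn = 1)
    (hmom : Integrable (fun y : ℝ => |y| ^ 4) (μp + μn)) (ξ : ℝ) :
    ‖muHat μp μn ξ - Complex.I * ξ‖ ≤ (∫ y, y ^ 2 ∂(μp + μn)) * ξ ^ 2 := by
  obtain ⟨hp, hn⟩ := integrable_add_measure.mp hmom
  have hmean' : ((∫ y, y ∂μp : ℝ) : ℂ) - ((∫ y, y ∂μn : ℝ) : ℂ) = 1 := by exact_mod_cast hmean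
  have hmass : (μp.real Set.univ : ℂ) = μn.real Set.univ := by simp [Measure.real, hzero]
  have hsplit : muHat μp μn ξ - Complex.I * ξ
      = (∫ y, (Complex.exp (Complex.I * ξ * y) - 1 - Complex.I * ξ * y) ∂μp)
        - ∫ y, (Complex.exp (Complex.I * ξ * y) - 1 - Complex.I * ξ * y) ∂μn := by
    have hp1 : Integrable (fun y : ℝ => y) μp := by
      simpa using integrable_pow_of_integrable_abs_pow (n := 1) (by norm_num) hp
    have hn1 : Integrable (fun y : ℝ => y) μn := by
      simpa using integrable_pow_of_integrable_abs_pow (n := 1) (by norm_num) hn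
    rw [integral_exp_I_mul_sub_one_sub hp1, integral_exp_I_mul_sub_one_sub hn1, muHat]
    linear_combination hmass + Complex.I * ξ * hmean'
  have hp2 := integrable_pow_of_integrable_abs_pow (n := 2) (by norm_num) hp
  have hn2 := integrable_pow_of_integrable_abs_pow (n := 2) (by norm_num) hn
  calc ‖muHat μp μn ξ - Complex.I * ξ‖
      ≤ (∫ y, y ^ 2 ∂μp) * ξ ^ 2 + (∫ y, y ^ 2 ∂μn) * ξ ^ 2 := by
        rw [hsplit]
        exact (norm_sub_le _ _).trans (add_le_add (norm_integral_exp_I_mul_sub_one_sub_le hp2 ξ)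
          (norm_integral_exp_I_mul_sub_one_sub_le hn2 ξ))
    _ = (∫ y, y ^ 2 ∂(μp + μn)) * ξ ^ 2 := by rw [integral_add_measure hp2 hn2]; ring

end FourierTransform

theorem mul_sq_le_rpow_mul_rpow_of_mul_le_one {ε α r : ℝ} (hε : 0 < ε) (hα : α ≤ 1) (hr : 0 ≤ r)
    (hεr : ε * r ≤ 1) : ε * r ^ 2 ≤ ε ^ α * r ^ (1 + α) := by
  have hsplit : ε * r ^ 2 = ε ^ α * r ^ (1 + α) * (ε * r) ^ (1 - α) := by
    rw [Real.mul_rpow hε.le hr, mul_mul_mul_comm, ← Real.rpow_add hε,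
      mul_comm (r ^ (1 + α)), ← Real.rpow_add' hr (by norm_num)]
    norm_num
  rw [hsplit]
  exact mul_le_of_le_one_right (by positivity) (Real.rpow_le_one (by positivity) hεr (by linarith))

theorem le_rpow_mul_rpow_of_one_le_mul {ε α r : ℝ} (hε : 0 < ε) (hα : 0 ≤ α) (hr : 0 ≤ r)
    (hεr : 1 ≤ ε * r) : r ≤ ε ^ α * r ^ (1 + α) := by
  have hsplit : ε ^ α * r ^ (1 + α) = r * (ε * r) ^ α := by
    rw [Real.mul_rpow hε.le hr, add_comm, Real.rpow_add' hr (by linarith), Real.rpow_one]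
    ring
  rw [hsplit]
  exact le_mul_of_one_le_right hr (Real.one_le_rpow hεr hα)

theorem abs_rpow_le_one_add_sq_rpow {s : ℝ} (hs : 0 ≤ s) (x : ℝ) :
    |x| ^ s ≤ (1 + x ^ 2) ^ (s / 2) := by
  calc |x| ^ s = (x ^ 2) ^ (s / 2) := by
        rw [← sq_abs, ← Real.rpow_natCast, ← Real.rpow_mul (abs_nonneg x)]
        ring_nf
    _ ≤ (1 + x ^ 2) ^ (s / 2) := Real.rpow_le_rpow (sq_nonneg x) (by linarith) (by positivity)

theorem norm_inv_mul_comp_mul_sub_I_mul_le {m : ℝ → ℂ} {A B ε α : ℝ}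
    (hA : ∀ ξ : ℝ, ‖m ξ - Complex.I * ξ‖ ≤ A * ξ ^ 2) (hB : ∀ ξ : ℝ, ‖m ξ‖ ≤ B)
    (hε : 0 < ε) (hα0 : 0 ≤ α) (hα1 : α ≤ 1) (k : ℝ) :
    ‖((ε⁻¹ : ℝ) : ℂ) * m (ε * k) - Complex.I * k‖ ≤ (A + B + 1) * (ε ^ α * |k| ^ (1 + α)) := by
  have hA0 : 0 ≤ A := by simpa using (norm_nonneg _).trans (hA 1)
  have hB0 : 0 ≤ B := (norm_nonneg _).trans (hB 0)
  have hεinv : ‖((ε⁻¹ : ℝ) : ℂ)‖ = ε⁻¹ := by simp [hε.le]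
  rcases le_total (ε * |k|) 1 with hsmall | hlarge
  · have hfactor : ((ε⁻¹ : ℝ) : ℂ) * m (ε * k) - Complex.I * k
        = ((ε⁻¹ : ℝ) : ℂ) * (m (ε * k) - Complex.I * ((ε * k : ℝ) : ℂ)) := by
      have : (ε : ℂ) ≠ 0 := by exact_mod_cast hε.ne'
      push_cast
      field_simp
    calc _ = ε⁻¹ * ‖m (ε * k) - Complex.I * ((ε * k : ℝ) : ℂ)‖ := by
          rw [hfactor, norm_mul, hεinv]
      _ ≤ ε⁻¹ * (A * (ε * k) ^ 2) := by gcongr; exact hA _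
      _ = A * (ε * |k| ^ 2) := by rw [sq_abs]; field_simp
      _ ≤ A * (ε ^ α * |k| ^ (1 + α)) := by
          exact mul_le_mul_of_nonneg_left
            (mul_sq_le_rpow_mul_rpow_of_mul_le_one hε hα1 (abs_nonneg k) hsmall) hA0
      _ ≤ _ := by gcongr; linarith
  · calc _ ≤ ‖((ε⁻¹ : ℝ) : ℂ) * m (ε * k)‖ + ‖Complex.I * k‖ := norm_sub_le _ _
      _ ≤ ε⁻¹ * B + |k| := by
          rw [norm_mul, norm_mul, hεinv, Complex.norm_I, one_mul, Complex.norm_real,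
            Real.norm_eq_abs]
          gcongr
          exact hB _
      _ ≤ |k| * B + |k| := by
          gcongr
          rw [inv_le_iff_one_le_mul₀ hε]
          linarith [mul_comm ε |k|]
      _ = (B + 1) * |k| := by ring
      _ ≤ (B + 1) * (ε ^ α * |k| ^ (1 + α)) := by
          gcongr; exact le_rpow_mul_rpow_of_one_le_mul hε hα0 (abs_nonneg k) hlarge
      _ ≤ _ := by gcongr; linarith

theorem summable_and_sqrt_sobNormSq_mul_le {β s A : ℝ} {m u : ℤ → ℂ} (hA : 0 ≤ A)
    (hm : ∀ k : ℤ, ‖m k‖ ≤ A * (1 + (k : ℝ) ^ 2) ^ (s / 2))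
    (hu : Summable (fun k : ℤ => (1 + (k : ℝ) ^ 2) ^ β * ‖u k‖ ^ 2)) :
    Summable (fun k : ℤ => (1 + (k : ℝ) ^ 2) ^ (β - s) * ‖m k * u k‖ ^ 2) ∧
      Real.sqrt (sobNormSq (β - s) (fun k => m k * u k)) ≤ A * Real.sqrt (sobNormSq β u) := by
  have hterm : ∀ k : ℤ, (1 + (k : ℝ) ^ 2) ^ (β - s) * ‖m k * u k‖ ^ 2
      ≤ A ^ 2 * ((1 + (k : ℝ) ^ 2) ^ β * ‖u k‖ ^ 2) := by
    intro k
    have hx : 0 < 1 + (k : ℝ) ^ 2 := by positivity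
    have hm2 : ‖m k‖ ^ 2 ≤ A ^ 2 * (1 + (k : ℝ) ^ 2) ^ s :=
      calc ‖m k‖ ^ 2 ≤ (A * (1 + (k : ℝ) ^ 2) ^ (s / 2)) ^ 2 := by gcongr; exact hm k
        _ = A ^ 2 * (1 + (k : ℝ) ^ 2) ^ s := by
          rw [mul_pow, ← Real.rpow_natCast ((1 + (k : ℝ) ^ 2) ^ (s / 2)), ← Real.rpow_mul hx.le]
          ring_nf
    calc (1 + (k : ℝ) ^ 2) ^ (β - s) * ‖m k * u k‖ ^ 2
        ≤ (1 + (k : ℝ) ^ 2) ^ (β - s) * (A ^ 2 * (1 + (k : ℝ) ^ 2) ^ s * ‖u k‖ ^ 2) := by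
          rw [norm_mul, mul_pow]; gcongr
      _ = A ^ 2 * ((1 + (k : ℝ) ^ 2) ^ (β - s) * (1 + (k : ℝ) ^ 2) ^ s * ‖u k‖ ^ 2) := by ring
      _ = _ := by rw [← Real.rpow_add hx, sub_add_cancel]
  have hsum := Summable.of_nonneg_of_le (fun k => by positivity) hterm (hu.mul_left (A ^ 2))
  refine ⟨hsum, ?_⟩
  calc Real.sqrt (sobNormSq (β - s) (fun k => m k * u k))
      ≤ Real.sqrt (A ^ 2 * sobNormSq β u) := by
        rw [sobNormSq, sobNormSq, ← tsum_mul_left]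
        exact Real.sqrt_le_sqrt (hsum.tsum_le_tsum hterm (hu.mul_left _))
    _ = A * Real.sqrt (sobNormSq β u) := by rw [Real.sqrt_mul (sq_nonneg _), Real.sqrt_sq hA]

/-- `‖D_ε u - ∂_x u‖_{β-1-α} ≤ C ε^α ‖u‖_β`, where `D_ε` acts as the Fourier multiplier
`ε^{-1} μ̂(εk)` and `∂_x` as the multiplier `ik`. -/
theorem stmt_8 (β α : ℝ) (hα : α ∈ Set.Icc (0 : ℝ) 1)
    (μp μn : Measure ℝ) [IsFiniteMeasure μp] [IsFiniteMeasure μn]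
    (hzero : μp Set.univ = μn Set.univ)
    (hmean : (∫ y, y ∂μp) - ∫ y, y ∂μn = 1)
    (hmom : Integrable (fun y : ℝ => |y| ^ 4) (μp + μn)) :
    ∃ C > 0, ∀ ε ∈ Set.Ioc (0 : ℝ) 1, ∀ u : ℤ → ℂ,
      Summable (fun k : ℤ => (1 + (k : ℝ) ^ 2) ^ β * ‖u k‖ ^ 2) →
      Summable (fun k : ℤ => (1 + (k : ℝ) ^ 2) ^ (β - 1 - α) *
        ‖(((ε⁻¹ : ℝ) : ℂ) * muHat μp μn (ε * k) - Complex.I * k) * u k‖ ^ 2) ∧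
      Real.sqrt (sobNormSq (β - 1 - α)
          (fun k => (((ε⁻¹ : ℝ) : ℂ) * muHat μp μn (ε * k) - Complex.I * k) * u k)) ≤
        C * ε ^ α * Real.sqrt (sobNormSq β u) := by
  obtain ⟨hα0, hα1⟩ := hα
  set A := ∫ y, y ^ 2 ∂(μp + μn)
  set B := (μp + μn).real Set.univ
  have hA : 0 ≤ A := integral_nonneg fun y => sq_nonneg y
  have hB : 0 ≤ B := measureReal_nonneg
  refine ⟨A + B + 1, by positivity, fun ε ⟨hε, _⟩ u hu => ?_⟩
  rw [show β - 1 - α = β - (1 + α) by ring]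
  refine summable_and_sqrt_sobNormSq_mul_le (by positivity) (fun k => ?_) hu
  calc _ ≤ (A + B + 1) * (ε ^ α * |(k : ℝ)| ^ (1 + α)) := by
        simpa using norm_inv_mul_comp_mul_sub_I_mul_le (norm_muHat_sub_I_mul_le hzero hmean hmom)
          norm_muHat_le hε hα0 hα1 k
    _ ≤ _ := by
        rw [mul_assoc]
        gcongr
        exact abs_rpow_le_one_add_sq_rpow (by linarith) _
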